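/- There exists an absolute constant C > 0 such that for all real β with 0 < β ≤ 1, all real Δ ≥ 1, and all complex z = x + iy, one has |m⁺_{β,Δ}(z)| ≤ C · Δ² · e^{2πΔ|y|} / (β·(1 + Δ|z|)). -/

import Mathlib

open scoped Real

noncomputable def mPlusC (β Δ : ℝ) (z : ℂ) : ℂ :=
  ((β : ℂ) / ((β : ℂ) ^ 2 + z ^ 2)) *
    (((Real.exp (2 * π * β * Δ) : ℂ) + (Real.exp (-(2 * π * β * Δ)) : ℂ)
        - 2 * Complex.cos (2 * π * Δ * z)) /
      ((Real.exp (π * β * Δ) : ℂ) - (Real.exp (-(π * β * Δ)) : ℂ)) ^ 2)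

/-!
With `a = πβΔ` and `ζ± = πΔ(z ± iβ)`, the numerator is `2(cos(2ia) - cos(2πΔz)) = 4 sin ζ₊ sin ζ₋`
and the denominator is `4 sinh² a`, so `m⁺ = β (sin ζ₊ / (z + iβ)) (sin ζ₋ / (z - iβ)) / sinh² a`.
Since `|sin ζ| ≤ min(1, |ζ|) e^{|Im ζ|}`, each quotient is at most `min(πΔ, 1/|z ± iβ|) e^{πΔ|y| + a}`.
One of `|z ± iβ|` is at least `|z|`, which bounds the product of the two minima by
`2(πΔ)² / (1 + Δ|z|)`, and `sinh a ≥ β eᵃ / 3` absorbs both `e^{2a}` and one factor `β`.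
-/

open Complex

namespace Complex

lemma norm_exp_mul_I_le (ζ : ℂ) : ‖exp (ζ * I)‖ ≤ Real.exp |ζ.im| := by
  rw [norm_exp]
  gcongr
  simpa using neg_le_abs ζ.im

lemma norm_sin_le_exp_abs_im (ζ : ℂ) : ‖sin ζ‖ ≤ Real.exp |ζ.im| := by
  have h₁ := norm_exp_mul_I_le ζ
  have h₂ := norm_exp_mul_I_le (-ζ)
  rw [neg_im, abs_neg] at h₂
  calc ‖sin ζ‖ = ‖exp (-ζ * I) - exp (ζ * I)‖ / 2 := by simp [sin]
    _ ≤ (‖exp (-ζ * I)‖ + ‖exp (ζ * I)‖) / 2 := by gcongr; exact norm_sub_le _ _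
    _ ≤ Real.exp |ζ.im| := by linarith

lemma norm_cos_le_exp_abs_im (ζ : ℂ) : ‖cos ζ‖ ≤ Real.exp |ζ.im| := by
  have h₁ := norm_exp_mul_I_le ζ
  have h₂ := norm_exp_mul_I_le (-ζ)
  rw [neg_im, abs_neg] at h₂
  calc ‖cos ζ‖ = ‖exp (ζ * I) + exp (-ζ * I)‖ / 2 := by simp [cos]
    _ ≤ (‖exp (ζ * I)‖ + ‖exp (-ζ * I)‖) / 2 := by gcongr; exact norm_add_le _ _
    _ ≤ Real.exp |ζ.im| := by linarith

lemma norm_sin_le_norm_mul_exp_abs_im (ζ : ℂ) : ‖sin ζ‖ ≤ ‖ζ‖ * Real.exp |ζ.im| := by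
  set r := |ζ.im|
  set S : Set ℂ := {w | w.im ≤ r} ∩ {w | -r ≤ w.im}
  have hS : Convex ℝ S := (convex_halfSpace_im_le r).inter (convex_halfSpace_im_ge (-r))
  have hbound : ∀ w ∈ S, ‖deriv sin w‖ ≤ Real.exp r := by
    rintro w ⟨hw₁, hw₂⟩
    rw [deriv_sin]
    exact (norm_cos_le_exp_abs_im w).trans (Real.exp_le_exp.2 (abs_le.2 ⟨hw₂, hw₁⟩))
  have h0 : (0 : ℂ) ∈ S := by simp [S, r]
  have hζ : ζ ∈ S := ⟨le_abs_self ζ.im, neg_abs_le ζ.im⟩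
  simpa [mul_comm] using
    hS.norm_image_sub_le_of_norm_deriv_le (fun w _ ↦ differentiableAt_sin) hbound h0 hζ

lemma norm_sin_ofReal_mul_div_le {c t : ℝ} (hc : 0 ≤ c) {w : ℂ} (hw : |w.im| ≤ t) :
    ‖sin (c * w)‖ / ‖w‖ ≤ min c ‖w‖⁻¹ * Real.exp (c * t) := by
  have hexp : Real.exp |(c * w).im| ≤ Real.exp (c * t) := by
    rw [im_ofReal_mul, abs_mul, abs_of_nonneg hc]
    gcongr
  rw [min_mul_of_nonneg _ _ (Real.exp_pos _).le]
  refine le_min (div_le_of_le_mul₀ (norm_nonneg _) (by positivity) ?_) ?_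
  · calc ‖sin (c * w)‖ ≤ ‖(c : ℂ) * w‖ * Real.exp |(c * w).im| :=
          norm_sin_le_norm_mul_exp_abs_im _
      _ ≤ c * Real.exp (c * t) * ‖w‖ := by
          rw [norm_mul, norm_real, Real.norm_of_nonneg hc, mul_right_comm]
          gcongr
  · rw [div_eq_inv_mul]
    gcongr
    exact (norm_sin_le_exp_abs_im _).trans hexp

lemma exp_add_exp_neg_sub_two_mul_cos (a : ℝ) (w : ℂ) :
    (Real.exp (2 * a) : ℂ) + (Real.exp (-(2 * a)) : ℂ) - 2 * cos (2 * w)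
      = 4 * sin (w + a * I) * sin (w - a * I) := by
  have hcosh : (Real.exp (2 * a) : ℂ) + (Real.exp (-(2 * a)) : ℂ) = 2 * cos (2 * a * I) := by
    push_cast
    rw [cos_mul_I, two_cosh]
  rw [hcosh, ← mul_sub, cos_sub_cos, show (2 * a * I + 2 * w) / 2 = w + a * I by ring,
    show (2 * a * I - 2 * w) / 2 = -(w - a * I) by ring, sin_neg]
  ring

end Complex

-- Both sides use `x / 0 = 0`, so this also holds at the removable singularities `z = ±iβ`.
lemma mPlusC_eq (β Δ : ℝ) (z : ℂ) :
    mPlusC β Δ z = β * (sin ((π * Δ : ℝ) * (z + β * I)) / (z + β * I))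
      * (sin ((π * Δ : ℝ) * (z - β * I)) / (z - β * I)) / (Real.sinh (π * β * Δ) : ℂ) ^ 2 := by
  have hnum := exp_add_exp_neg_sub_two_mul_cos (π * β * Δ) (π * Δ * z)
  have hden : (Real.exp (π * β * Δ) : ℂ) - (Real.exp (-(π * β * Δ)) : ℂ)
      = 2 * (Real.sinh (π * β * Δ) : ℂ) := by
    push_cast
    rw [two_sinh]
  have hsq : (β : ℂ) ^ 2 + z ^ 2 = (z + β * I) * (z - β * I) := by
    linear_combination (β : ℂ) ^ 2 * I_sq
  have hp : (π : ℂ) * Δ * z + (π * β * Δ : ℝ) * I = (π * Δ : ℝ) * (z + β * I) := by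
    push_cast; ring
  have hm : (π : ℂ) * Δ * z - (π * β * Δ : ℝ) * I = (π * Δ : ℝ) * (z - β * I) := by
    push_cast; ring
  rw [mPlusC, hden, hsq, show 2 * π * β * Δ = 2 * (π * β * Δ) by ring,
    show 2 * (π : ℂ) * Δ * z = 2 * (π * Δ * z) by ring, hnum, hp, hm]
  generalize z + β * I = p
  generalize z - β * I = q
  ring

lemma mul_exp_le_one_add_two_mul_mul_sinh {a b : ℝ} (hba : b ≤ a) :
    b * Real.exp a ≤ (1 + 2 * b) * Real.sinh a := by
  have h : (1 + 2 * b) * Real.exp (-a) ≤ Real.exp a :=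
    calc (1 + 2 * b) * Real.exp (-a) ≤ Real.exp (a + a) * Real.exp (-a) := by
          gcongr
          linarith [Real.add_one_le_exp (a + a)]
      _ = Real.exp a := by rw [← Real.exp_add]; ring_nf
  rw [Real.sinh_eq]
  linarith

lemma norm_le_max_norm_add_norm_sub {E : Type*} [SeminormedAddCommGroup E] [NormedSpace ℝ E]
    (x v : E) : ‖x‖ ≤ max ‖x + v‖ ‖x - v‖ := by
  have h : ‖(2 : ℝ) • x‖ ≤ ‖x + v‖ + ‖x - v‖ := by
    rw [two_smul, show x + x = (x + v) + (x - v) by abel]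
    exact norm_add_le _ _
  rw [norm_smul, Real.norm_two] at h
  linarith [le_max_left ‖x + v‖ ‖x - v‖, le_max_right ‖x + v‖ ‖x - v‖]

lemma one_add_mul_norm_mul_min_inv_le {E : Type*} [SeminormedAddCommGroup E] [NormedSpace ℝ E]
    (x v : E) {Δ c : ℝ} (hΔ : 0 ≤ Δ) (hc : Δ ≤ c) :
    (1 + Δ * ‖x‖) * min c ‖x + v‖⁻¹ * min c ‖x - v‖⁻¹ ≤ 2 * c ^ 2 := by
  have hc₀ : 0 ≤ c := hΔ.trans hc
  have hp₀ : 0 ≤ min c ‖x + v‖⁻¹ := le_min hc₀ (by positivity)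
  have hm₀ : 0 ≤ min c ‖x - v‖⁻¹ := le_min hc₀ (by positivity)
  rcases le_total (Δ * ‖x‖) 1 with hx | hx
  · calc (1 + Δ * ‖x‖) * min c ‖x + v‖⁻¹ * min c ‖x - v‖⁻¹ ≤ 2 * c * c := by
          gcongr
          · linarith
          · exact min_le_left _ _
          · exact min_le_left _ _
      _ = 2 * c ^ 2 := by ring
  · have hx₀ : 0 < ‖x‖ := by
      by_contra! h
      nlinarith [norm_nonneg x]
    have hprod : min c ‖x + v‖⁻¹ * min c ‖x - v‖⁻¹ ≤ ‖x‖⁻¹ * c := by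
      rcases le_max_iff.1 (norm_le_max_norm_add_norm_sub x v) with h | h
      · exact mul_le_mul ((min_le_right _ _).trans (inv_anti₀ hx₀ h)) (min_le_left _ _) hm₀
          (by positivity)
      · rw [mul_comm]
        exact mul_le_mul ((min_le_right _ _).trans (inv_anti₀ hx₀ h)) (min_le_left _ _) hp₀
          (by positivity)
    calc (1 + Δ * ‖x‖) * min c ‖x + v‖⁻¹ * min c ‖x - v‖⁻¹
        ≤ (2 * Δ * ‖x‖) * (‖x‖⁻¹ * c) := by
          rw [mul_assoc]
          gcongr
          linarith
      _ = 2 * Δ * c := by field_simp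
      _ ≤ 2 * c ^ 2 := by nlinarith

lemma norm_mPlusC_le {β Δ : ℝ} (hβ : 0 ≤ β) (hΔ : 0 ≤ Δ) (z : ℂ) :
    ‖mPlusC β Δ z‖ ≤ β * (min (π * Δ) ‖z + β * I‖⁻¹ * min (π * Δ) ‖z - β * I‖⁻¹)
      * Real.exp (2 * π * Δ * |z.im|) * (Real.exp (π * β * Δ) / Real.sinh (π * β * Δ)) ^ 2 := by
  have hp := norm_sin_ofReal_mul_div_le (c := π * Δ) (w := z + β * I) (t := |z.im| + β)
    (by positivity) (by simpa [abs_of_nonneg hβ] using abs_add_le z.im β)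
  have hm := norm_sin_ofReal_mul_div_le (c := π * Δ) (w := z - β * I) (t := |z.im| + β)
    (by positivity) (by simpa [abs_of_nonneg hβ] using abs_sub z.im β)
  have hexp : Real.exp (π * Δ * (|z.im| + β)) ^ 2
      = Real.exp (2 * π * Δ * |z.im|) * Real.exp (π * β * Δ) ^ 2 := by
    rw [← Real.exp_nat_mul, ← Real.exp_nat_mul, ← Real.exp_add]
    ring_nf
  rw [mPlusC_eq]
  simp only [norm_div, norm_mul, norm_pow, norm_real, Real.norm_of_nonneg hβ, Real.norm_eq_abs,
    sq_abs]
  calc _ ≤ β * (min (π * Δ) ‖z + β * I‖⁻¹ * Real.exp (π * Δ * (|z.im| + β)))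
        * (min (π * Δ) ‖z - β * I‖⁻¹ * Real.exp (π * Δ * (|z.im| + β)))
        / Real.sinh (π * β * Δ) ^ 2 := by gcongr
    _ = _ := by
      linear_combination (β * min (π * Δ) ‖z + β * I‖⁻¹ * min (π * Δ) ‖z - β * I‖⁻¹
        / Real.sinh (π * β * Δ) ^ 2) * hexp

theorem complex_growth_bound_majorant :
    ∃ C : ℝ, 0 < C ∧ ∀ β Δ : ℝ, ∀ z : ℂ, 0 < β → β ≤ 1 → 1 ≤ Δ →
      ‖mPlusC β Δ z‖ ≤
        C * Δ ^ 2 * Real.exp (2 * π * Δ * |z.im|) / (β * (1 + Δ * ‖z‖)) := by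
  refine ⟨18 * π ^ 2, by positivity, fun β Δ z hβ hβ₁ hΔ ↦ ?_⟩
  have hΔ₀ : 0 ≤ Δ := by linarith
  have hπΔ : Δ ≤ π * Δ := le_mul_of_one_le_left hΔ₀ (by linarith [Real.pi_gt_three])
  have hsinh₀ : 0 < Real.sinh (π * β * Δ) := Real.sinh_pos_iff.2 (by positivity)
  have hsinh : β * (Real.exp (π * β * Δ) / Real.sinh (π * β * Δ)) ≤ 3 := by
    rw [← mul_div_assoc]
    refine div_le_of_le_mul₀ hsinh₀.le (by norm_num) ?_
    have := mul_exp_le_one_add_two_mul_mul_sinh (a := π * β * Δ) (b := β) (by nlinarith)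
    nlinarith
  have hgeo := one_add_mul_norm_mul_min_inv_le z (β * I) hΔ₀ hπΔ
  rw [le_div_iff₀ (by positivity)]
  calc _ ≤ β * (min (π * Δ) ‖z + β * I‖⁻¹ * min (π * Δ) ‖z - β * I‖⁻¹)
        * Real.exp (2 * π * Δ * |z.im|) * (Real.exp (π * β * Δ) / Real.sinh (π * β * Δ)) ^ 2
        * (β * (1 + Δ * ‖z‖)) := by gcongr; exact norm_mPlusC_le hβ.le hΔ₀ z
    _ = (1 + Δ * ‖z‖) * min (π * Δ) ‖z + β * I‖⁻¹ * min (π * Δ) ‖z - β * I‖⁻¹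
        * Real.exp (2 * π * Δ * |z.im|)
        * (β * (Real.exp (π * β * Δ) / Real.sinh (π * β * Δ))) ^ 2 := by ring
    _ ≤ 2 * (π * Δ) ^ 2 * Real.exp (2 * π * Δ * |z.im|) * 3 ^ 2 := by gcongr
    _ = 18 * π ^ 2 * Δ ^ 2 * Real.exp (2 * π * Δ * |z.im|) := by ring
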